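/- There exists a set A ⊆ ℕ that is additively thick, multiplicatively thick, and contains no exponential triple: there do not exist x, y ∈ A with x ≠ y and x^y ∈ A. -/

import Mathlib

/-!
Take `A = ⋃ₙ [lo n, hi n]` with `hi n = (n + 2) * lo n` and `lo (n + 1) = hi n ^ hi n + 1`.
The `n`-th interval contains `lo n + [0, n]` and `{lo n, 2 lo n, …, n lo n}`. If `x, y ∈ A` and
`N` is the larger of their interval indices, then `x ^ y ≤ hi N ^ hi N < lo (N + 1)`; on the other
hand `x, y ≥ 3` and one of them is at least `lo N`, which forces `x ^ y > hi N`. So `x ^ y` falls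
into the gap between two intervals.
-/

/-- `A` is additively thick: it contains arbitrarily long intervals. -/
def AddThick (A : Set ℕ) : Prop :=
  ∀ k : ℕ, ∃ a : ℕ, ∀ i ≤ k, a + i ∈ A

/-- `A` is multiplicatively thick: for every `k` there is `a ≥ 1` with
`{a, 2a, …, ka} ⊆ A`. -/
def MulThick (A : Set ℕ) : Prop :=
  ∀ k : ℕ, ∃ a : ℕ, 1 ≤ a ∧ ∀ i : ℕ, 1 ≤ i → i ≤ k → i * a ∈ A

open Set

section IntervalUnion

variable {a b : ℕ → ℕ}

theorem addThick_iUnion_Icc (h : ∀ k, ∃ n, a n + k ≤ b n) :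
    AddThick (⋃ n, Icc (a n) (b n)) := by
  intro k
  obtain ⟨n, hn⟩ := h k
  exact ⟨a n, fun i hi => mem_iUnion.2 ⟨n, by omega, by omega⟩⟩

theorem mulThick_iUnion_Icc (h : ∀ k, ∃ n, 1 ≤ a n ∧ k * a n ≤ b n) :
    MulThick (⋃ n, Icc (a n) (b n)) := by
  intro k
  obtain ⟨n, hpos, hn⟩ := h k
  refine ⟨a n, hpos, fun i hi hik => mem_iUnion.2 ⟨n, ?_, ?_⟩⟩
  · exact Nat.le_mul_of_pos_left _ hi
  · exact (Nat.mul_le_mul_right _ hik).trans hn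

theorem notMem_iUnion_Icc_of_gap (ha : Monotone a) (hb : Monotone b) {N m : ℕ}
    (hlow : b N < m) (hup : m < a (N + 1)) : m ∉ ⋃ n, Icc (a n) (b n) := by
  rintro ⟨-, ⟨j, rfl⟩, hj, hj'⟩
  rcases le_or_gt j N with hjN | hjN
  · have := hb hjN
    omega
  · have : a (N + 1) ≤ a j := ha hjN
    omega

end IntervalUnion

theorem sq_lt_three_pow (n : ℕ) : n ^ 2 < 3 ^ n := by
  induction n with
  | zero => norm_num
  | succ n ih =>
    have h : n < 3 ^ n := Nat.lt_pow_self (by norm_num)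
    rw [pow_succ 3 n]
    nlinarith

theorem mul_lt_pow_of_le_or_le {a c x y : ℕ} (hx : 3 ≤ x) (hy : 3 ≤ y) (hc : c < a)
    (ha : a ≤ x ∨ a ≤ y) : c * a < x ^ y := by
  have hca : c * a < a ^ 2 := by rw [sq]; exact Nat.mul_lt_mul_of_pos_right hc (by omega)
  refine hca.trans_le ?_
  rcases ha with hax | hay
  · calc a ^ 2 ≤ x ^ 2 := Nat.pow_le_pow_left hax 2
      _ ≤ x ^ y := Nat.pow_le_pow_right (by omega) (by omega)
  · calc a ^ 2 ≤ 3 ^ a := (sq_lt_three_pow a).le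
      _ ≤ 3 ^ y := Nat.pow_le_pow_right (by norm_num) hay
      _ ≤ x ^ y := Nat.pow_le_pow_left hx y

namespace ExpTripleFree

def lo : ℕ → ℕ
  | 0 => 3
  | n + 1 => ((n + 2) * lo n) ^ ((n + 2) * lo n) + 1

def hi (n : ℕ) : ℕ := (n + 2) * lo n

def A : Set ℕ := ⋃ n, Icc (lo n) (hi n)

theorem lo_succ (n : ℕ) : lo (n + 1) = hi n ^ hi n + 1 := rfl

theorem lo_le_hi (n : ℕ) : lo n ≤ hi n := Nat.le_mul_of_pos_left _ (by omega)

theorem add_three_le_lo (n : ℕ) : n + 3 ≤ lo n := by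
  induction n with
  | zero => simp [lo]
  | succ n ih =>
    have hhi : (n + 2) * (n + 3) ≤ hi n := Nat.mul_le_mul_left _ ih
    rw [lo_succ]
    nlinarith [Nat.le_self_pow (show hi n ≠ 0 by nlinarith) (hi n)]

theorem hi_pow_hi_lt_lo_succ (n : ℕ) : hi n ^ hi n < lo (n + 1) := by
  rw [lo_succ]
  exact Nat.lt_succ_self _

theorem hi_lt_lo_succ (n : ℕ) : hi n < lo (n + 1) :=
  (Nat.le_self_pow (by have := lo_le_hi n; have := add_three_le_lo n; omega) _).trans_lt
    (hi_pow_hi_lt_lo_succ n)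

theorem lo_mono : Monotone lo :=
  monotone_nat_of_le_succ fun n => (lo_le_hi n).trans (hi_lt_lo_succ n).le

theorem hi_mono : Monotone hi :=
  monotone_nat_of_le_succ fun n => (hi_lt_lo_succ n).le.trans (lo_le_hi (n + 1))

theorem addThick_A : AddThick A :=
  addThick_iUnion_Icc fun k => ⟨k, by
    have := add_three_le_lo k
    unfold hi
    nlinarith⟩

theorem mulThick_A : MulThick A :=
  mulThick_iUnion_Icc fun k => ⟨k, by have := add_three_le_lo k; omega,
    Nat.mul_le_mul_right _ (by omega)⟩

theorem hi_lt_pow_lt_lo_succ {x y m k : ℕ} (hx : x ∈ Icc (lo m) (hi m))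
    (hy : y ∈ Icc (lo k) (hi k)) :
    hi (max m k) < x ^ y ∧ x ^ y < lo (max m k + 1) := by
  set N := max m k
  have hxN : x ≤ hi N := hx.2.trans (hi_mono (le_max_left m k))
  have hyN : y ≤ hi N := hy.2.trans (hi_mono (le_max_right m k))
  have hx3 : 3 ≤ x := by have := add_three_le_lo m; have := hx.1; omega
  have hy3 : 3 ≤ y := by have := add_three_le_lo k; have := hy.1; omega
  constructor
  · have hlarge : lo N ≤ x ∨ lo N ≤ y := by
      rcases le_total m k with hmk | hkm
      · exact Or.inr (by simpa [N, hmk] using hy.1)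
      · exact Or.inl (by simpa [N, hkm] using hx.1)
    exact mul_lt_pow_of_le_or_le hx3 hy3 (by have := add_three_le_lo N; omega) hlarge
  · calc x ^ y ≤ hi N ^ y := Nat.pow_le_pow_left hxN y
      _ ≤ hi N ^ hi N := Nat.pow_le_pow_right (by omega) hyN
      _ < lo (N + 1) := hi_pow_hi_lt_lo_succ N

theorem pow_notMem_A {x y : ℕ} (hx : x ∈ A) (hy : y ∈ A) : x ^ y ∉ A := by
  obtain ⟨-, ⟨m, rfl⟩, hxm⟩ := hx
  obtain ⟨-, ⟨k, rfl⟩, hyk⟩ := hy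
  obtain ⟨hlow, hup⟩ := hi_lt_pow_lt_lo_succ hxm hyk
  exact notMem_iUnion_Icc_of_gap lo_mono hi_mono hlow hup

end ExpTripleFree

/-- There is a doubly thick set with no exponential triple. -/
theorem thick_without_exponential_triple :
    ∃ A : Set ℕ, AddThick A ∧ MulThick A ∧
      ¬ ∃ x ∈ A, ∃ y ∈ A, x ≠ y ∧ x ^ y ∈ A :=
  ⟨ExpTripleFree.A, ExpTripleFree.addThick_A, ExpTripleFree.mulThick_A,
    fun ⟨_, hx, _, hy, _, hxy⟩ => ExpTripleFree.pow_notMem_A hx hy hxy⟩
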